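/- Let X be a nonempty set, (T_n) a sequence of maps from a set 𝒵 of bounded functions X → ℝ to itself, and T a map 𝒵 → 𝒵 that is a γ-contraction in the supremum norm with unique fixed point q*. Suppose sup_{Z∈𝒵} ‖T_n Z − T Z‖_∞ ≤ c_n with c_n → 0, and suppose the iterates Q_n := T_n T_{n−1} ⋯ T_1 Q_0 converge in supremum norm to some Q*. Then Q* = q*. -/

import Mathlib

/-!
By the triangle inequality through `Q (n+1) = Tn (n+1) (Q n)` and `T (Q n)`, `Qs` is within
`‖Q (n+1) - Qs‖ + c (n+1) + γ ‖Q n - Qs‖` of `T Qs`, and all three terms tend to `0`.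
So `Qs` is a fixed point of `T`, hence equals `q` by uniqueness.
-/

open Filter

section SupDistance

variable {X : Type*} {f g : X → ℝ}

lemma bddAbove_range_abs_sub (hf : ∃ C, ∀ x, |f x| ≤ C) (hg : ∃ C, ∀ x, |g x| ≤ C) :
    BddAbove (Set.range fun x => |f x - g x|) := by
  obtain ⟨Cf, hCf⟩ := hf
  obtain ⟨Cg, hCg⟩ := hg
  refine ⟨Cf + Cg, ?_⟩
  rintro _ ⟨x, rfl⟩
  exact (abs_sub _ _).trans (add_le_add (hCf x) (hCg x))

lemma abs_sub_le_iSup_abs_sub (hf : ∃ C, ∀ x, |f x| ≤ C) (hg : ∃ C, ∀ x, |g x| ≤ C) (x : X) :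
    |f x - g x| ≤ ⨆ y, |f y - g y| :=
  le_ciSup (bddAbove_range_abs_sub hf hg) x

end SupDistance

lemma perturbedIterate_mem {α : Type*} {𝒵 : Set α} {S : ℕ → α → α}
    (hS : ∀ n, ∀ Z ∈ 𝒵, S n Z ∈ 𝒵) {Q : ℕ → α} (hQ0 : Q 0 ∈ 𝒵)
    (hQrec : ∀ n, Q (n + 1) = S (n + 1) (Q n)) (n : ℕ) : Q n ∈ 𝒵 := by
  induction n with
  | zero => exact hQ0
  | succ k ih => exact hQrec k ▸ hS (k + 1) _ ih

lemma abs_sub_apply_le_of_contraction {X : Type*} {𝒵 : Set (X → ℝ)}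
    (hbdd : ∀ Z ∈ 𝒵, ∃ C, ∀ x, |Z x| ≤ C) {T : (X → ℝ) → (X → ℝ)} {γ : ℝ}
    (hTmap : ∀ Z ∈ 𝒵, T Z ∈ 𝒵)
    (hcontr : ∀ f ∈ 𝒵, ∀ g ∈ 𝒵, (⨆ x, |T f x - T g x|) ≤ γ * ⨆ x, |f x - g x|)
    {Y Z W : X → ℝ} (hY : Y ∈ 𝒵) (hZ : Z ∈ 𝒵) (hW : W ∈ 𝒵) (x : X) :
    |W x - T W x| ≤ (⨆ y, |Y y - W y|) + (⨆ y, |Y y - T Z y|) + γ * ⨆ y, |Z y - W y| := by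
  have hTZ := hTmap Z hZ
  have hTW := hTmap W hW
  calc |W x - T W x| ≤ |Y x - W x| + |Y x - T Z x| + |T Z x - T W x| := by
        rw [abs_sub_comm (Y x)]
        linarith [abs_sub_le (W x) (Y x) (T W x), abs_sub_le (Y x) (T Z x) (T W x)]
    _ ≤ _ := by
        gcongr
        · exact abs_sub_le_iSup_abs_sub (hbdd Y hY) (hbdd W hW) x
        · exact abs_sub_le_iSup_abs_sub (hbdd Y hY) (hbdd _ hTZ) x
        · exact (abs_sub_le_iSup_abs_sub (hbdd _ hTZ) (hbdd _ hTW) x).trans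
            (hcontr Z hZ W hW)

lemma isFixedPt_of_tendsto_perturbedIterate {X : Type*} {𝒵 : Set (X → ℝ)}
    (hbdd : ∀ Z ∈ 𝒵, ∃ C, ∀ x, |Z x| ≤ C)
    {T : (X → ℝ) → (X → ℝ)} {Tn : ℕ → (X → ℝ) → (X → ℝ)} {γ : ℝ}
    (hTmap : ∀ Z ∈ 𝒵, T Z ∈ 𝒵) (hTnmap : ∀ n, ∀ Z ∈ 𝒵, Tn n Z ∈ 𝒵)
    (hcontr : ∀ f ∈ 𝒵, ∀ g ∈ 𝒵, (⨆ x, |T f x - T g x|) ≤ γ * ⨆ x, |f x - g x|)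
    {c : ℕ → ℝ} (hc : Tendsto c atTop (nhds 0))
    (happrox : ∀ n, ∀ Z ∈ 𝒵, (⨆ x, |Tn n Z x - T Z x|) ≤ c n)
    {Q : ℕ → X → ℝ} (hQ0 : Q 0 ∈ 𝒵) (hQrec : ∀ n, Q (n + 1) = Tn (n + 1) (Q n))
    {Qs : X → ℝ} (hQs : Qs ∈ 𝒵)
    (hconv : Tendsto (fun n => ⨆ x, |Q n x - Qs x|) atTop (nhds 0)) :
    Function.IsFixedPt T Qs := by
  have hQ := perturbedIterate_mem hTnmap hQ0 hQrec
  have hdefect : ∀ x n, |Qs x - T Qs x| ≤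
      (⨆ y, |Q (n + 1) y - Qs y|) + c (n + 1) + γ * ⨆ y, |Q n y - Qs y| := by
    intro x n
    refine (abs_sub_apply_le_of_contraction hbdd hTmap hcontr (hQ (n + 1)) (hQ n) hQs x).trans ?_
    gcongr
    exact hQrec n ▸ happrox (n + 1) _ (hQ n)
  have hbound : Tendsto (fun n => (⨆ y, |Q (n + 1) y - Qs y|) + c (n + 1)
      + γ * ⨆ y, |Q n y - Qs y|) atTop (nhds 0) := by
    simpa using ((hconv.comp (tendsto_add_atTop_nat 1)).add
      (hc.comp (tendsto_add_atTop_nat 1))).add (hconv.const_mul γ)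
  funext x
  have h := abs_nonpos_iff.mp (ge_of_tendsto' hbound (hdefect x))
  linarith

theorem stmt_17_general (X : Type*) (𝒵 : Set (X → ℝ))
    (hbdd : ∀ Z ∈ 𝒵, ∃ C, ∀ x, |Z x| ≤ C)
    (T : (X → ℝ) → (X → ℝ)) (Tn : ℕ → (X → ℝ) → (X → ℝ))
    (γ : ℝ)
    (hTmap : ∀ Z ∈ 𝒵, T Z ∈ 𝒵) (hTnmap : ∀ n, ∀ Z ∈ 𝒵, Tn n Z ∈ 𝒵)
    (hcontr : ∀ f ∈ 𝒵, ∀ g ∈ 𝒵, (⨆ x, |T f x - T g x|) ≤ γ * ⨆ x, |f x - g x|)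
    (q : X → ℝ)
    (huniq : ∀ f ∈ 𝒵, T f = f → f = q)
    (c : ℕ → ℝ) (hc : Tendsto c atTop (nhds 0))
    (happrox : ∀ n, ∀ Z ∈ 𝒵, (⨆ x, |Tn n Z x - T Z x|) ≤ c n)
    (Q : ℕ → X → ℝ) (hQ0 : Q 0 ∈ 𝒵) (hQrec : ∀ n, Q (n + 1) = Tn (n + 1) (Q n))
    (Qs : X → ℝ) (hQs : Qs ∈ 𝒵)
    (hconv : Tendsto (fun n => ⨆ x, |Q n x - Qs x|) atTop (nhds 0)) :
    Qs = q :=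
  huniq Qs hQs <|
    isFixedPt_of_tendsto_perturbedIterate hbdd hTmap hTnmap hcontr hc happrox hQ0 hQrec hQs hconv

theorem stmt_17 (X : Type*) [Nonempty X] (𝒵 : Set (X → ℝ))
    (hbdd : ∀ Z ∈ 𝒵, ∃ C, ∀ x, |Z x| ≤ C)
    (T : (X → ℝ) → (X → ℝ)) (Tn : ℕ → (X → ℝ) → (X → ℝ))
    (γ : ℝ) (hγ0 : 0 ≤ γ) (hγ1 : γ < 1)
    (hTmap : ∀ Z ∈ 𝒵, T Z ∈ 𝒵) (hTnmap : ∀ n, ∀ Z ∈ 𝒵, Tn n Z ∈ 𝒵)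
    (hcontr : ∀ f ∈ 𝒵, ∀ g ∈ 𝒵, (⨆ x, |T f x - T g x|) ≤ γ * ⨆ x, |f x - g x|)
    (q : X → ℝ) (hq𝒵 : q ∈ 𝒵) (hfix : T q = q)
    (huniq : ∀ f ∈ 𝒵, T f = f → f = q)
    (c : ℕ → ℝ) (hc : Tendsto c atTop (nhds 0))
    (happrox : ∀ n, ∀ Z ∈ 𝒵, (⨆ x, |Tn n Z x - T Z x|) ≤ c n)
    (Q : ℕ → X → ℝ) (hQ0 : Q 0 ∈ 𝒵) (hQrec : ∀ n, Q (n + 1) = Tn (n + 1) (Q n))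
    (Qs : X → ℝ) (hQs : Qs ∈ 𝒵)
    (hconv : Tendsto (fun n => ⨆ x, |Q n x - Qs x|) atTop (nhds 0)) :
    Qs = q :=
  stmt_17_general X 𝒵 hbdd T Tn γ hTmap hTnmap hcontr q huniq c hc happrox Q hQ0 hQrec Qs hQs hconv
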